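/- arXiv:2103.10414 — 2 statements merged into one kernel-verified Lean document; each statement's English description precedes it below -/
import Mathlib

section
/- Let T be a tournament whose vertex set is partitioned into nonempty sets X and Y, and let δ be such that e⃗(X,Y) = δ|X||Y|. For x ∈ X define Y(x) = { v ∈ N⁺_Y(x) : |N⁻_X(v) ∩ N⁻_X(x)| ≥ δ|X|/8 }, and for y ∈ Y define X(y) = { u ∈ N⁻_X(y) : |N⁺_Y(u) ∩ N⁺_Y(y)| ≥ δ|Y|/8 }. If δ|X| > 2^{10} and δ|Y| > 2^{10}, then there exist vertices x ∈ X and y ∈ Y such that |X(y)| ≥ (δ/8)|X| and |Y(x)| ≥ (δ/8)|Y|. -/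
/-- `T` is a tournament relation: irreflexive, with exactly one directed edge
between any two distinct vertices. -/
def IsTournament {V : Type*} (T : V → V → Prop) : Prop :=
  (∀ v, ¬ T v v) ∧ ∀ u v : V, u ≠ v → (T u v ↔ ¬ T v u)

/-- Number of edges of `T` directed from `X` to `Y`. -/
def eDir {V : Type*} (T : V → V → Prop) [DecidableRel T] (X Y : Finset V) : ℕ :=
  ((X ×ˢ Y).filter fun p => T p.1 p.2).card

/-!
Fix `v ∈ Y` and let `d = |N⁻_X(v)|`. The subtournament on `N⁻_X(v)` has `d(d-1)/2` edges, and
each of its vertices has in-degree at most `d` there, so at least `(d-1)/2 - δ|X|/8` of them have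
at least `δ|X|/8` in-neighbours inside `N⁻_X(v)`; these are exactly the `x ∈ X` with `v ∈ Y(x)`.
Summing over `v ∈ Y`, with `∑ d = δ|X||Y|`, gives `∑_{x ∈ X} |Y(x)| ≥ (δ/8)|X||Y|` as soon as
`δ|X| ≥ 2`, so some `x` is good. Reversing all edges turns `X(y)` into `Y(x)` and gives `y`.
-/

open Finset

section Markov

variable {ι R : Type*} [CommSemiring R] [LinearOrder R] [IsOrderedRing R]

theorem Finset.sum_le_mul_card_filter_le_add_mul_card (s : Finset ι) (f : ι → R) {M θ : R}
    (hθ : 0 ≤ θ) (hM : ∀ i ∈ s, f i ≤ M) :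
    ∑ i ∈ s, f i ≤ M * #{i ∈ s | θ ≤ f i} + θ * #s := by
  rw [← sum_filter_add_sum_filter_not s (fun i => θ ≤ f i) f]
  gcongr
  · rw [mul_comm, ← nsmul_eq_mul]
    exact sum_le_card_nsmul _ _ _ fun i hi => hM i (mem_filter.1 hi).1
  · calc ∑ i ∈ s with ¬θ ≤ f i, f i ≤ #{i ∈ s | ¬θ ≤ f i} • θ :=
          sum_le_card_nsmul _ _ _ fun i hi => (not_le.1 (mem_filter.1 hi).2).le
      _ ≤ θ * #s := by
          rw [nsmul_eq_mul, mul_comm]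
          gcongr
          exact filter_subset _ s

end Markov

section eDir

variable {V : Type*} {T : V → V → Prop} [DecidableRel T]

theorem eDir_swap (A B : Finset V) : eDir (fun a b => T b a) B A = eDir T A B := by
  unfold eDir
  rw [card_filter, card_filter, sum_product, sum_product, sum_comm]

theorem eDir_eq_sum_card_filter (A B : Finset V) : eDir T A B = ∑ v ∈ B, #{u ∈ A | T u v} := by
  unfold eDir
  rw [card_filter, sum_product_right]
  simp only [card_filter]

end eDir

theorem Finset.ncard_setOf_mem_and {α : Type*} (s : Finset α) (p : α → Prop) [DecidablePred p] :
    {a | a ∈ s ∧ p a}.ncard = #{a ∈ s | p a} := by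
  rw [← Set.ncard_coe_finset, coe_filter]

namespace IsTournament

variable {V : Type*} {T : V → V → Prop}

theorem swap (hT : IsTournament T) : IsTournament fun a b => T b a :=
  ⟨hT.1, fun u v huv => hT.2 v u huv.symm⟩

variable [DecidableRel T]

theorem card_filter_add_card_filter [DecidableEq V] (hT : IsTournament T) {s : Finset V} {x : V}
    (hx : x ∈ s) : #{u ∈ s | T u x} + #{u ∈ s | T x u} = #s - 1 := by
  rw [← card_erase_of_mem hx, ← card_filter_add_card_filter_not (s := s.erase x) (T · x)]
  congr 2 <;> ext u <;> rcases eq_or_ne u x with rfl | hux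
  · simp [hT.1]
  · simp [hux]
  · simp [hT.1]
  · simp [hux, hT.2 x u hux.symm]

theorem two_mul_sum_card_filter [DecidableEq V] (hT : IsTournament T) (s : Finset V) :
    2 * ∑ x ∈ s, #{u ∈ s | T u x} = #s * (#s - 1) := by
  have hin_out : ∑ x ∈ s, #{u ∈ s | T u x} = ∑ x ∈ s, #{u ∈ s | T x u} := by
    simp only [card_filter]
    exact sum_comm
  calc 2 * ∑ x ∈ s, #{u ∈ s | T u x}
      = ∑ x ∈ s, (#{u ∈ s | T u x} + #{u ∈ s | T x u}) := by
        rw [sum_add_distrib, ← hin_out, two_mul]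
    _ = #s * (#s - 1) := by
        rw [sum_congr rfl fun x hx => hT.card_filter_add_card_filter hx, sum_const, smul_eq_mul]

theorem card_sub_one_div_two_sub_le_card_filter [DecidableEq V] (hT : IsTournament T)
    (s : Finset V) {θ : ℝ} (hθ : 0 ≤ θ) :
    ((#s : ℝ) - 1) / 2 - θ ≤ #{x ∈ s | θ ≤ #{u ∈ s | T u x}} := by
  rcases Nat.eq_zero_or_pos #s with hs | hs
  · rw [hs]
    have := (#{x ∈ s | θ ≤ #{u ∈ s | T u x}}).cast_nonneg (α := ℝ)
    linarith
  have hsum : ∑ x ∈ s, (#{u ∈ s | T u x} : ℝ) = #s * (#s - 1) / 2 := by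
    have := congrArg (Nat.cast : ℕ → ℝ) (hT.two_mul_sum_card_filter s)
    push_cast [Nat.cast_sub hs] at this
    linarith
  have hmarkov := sum_le_mul_card_filter_le_add_mul_card s (fun x => (#{u ∈ s | T u x} : ℝ)) hθ
    (M := #s) fun x _ => by exact_mod_cast card_filter_le s _
  rw [hsum] at hmarkov
  have hs_pos : (0 : ℝ) < #s := by exact_mod_cast hs
  nlinarith

theorem exists_le_card_filter_out_common_in [DecidableEq V] (hT : IsTournament T)
    (A B : Finset V) {δ : ℝ} (hδ : (eDir T A B : ℝ) = δ * #A * #B) (hδA : 2 ≤ δ * #A) :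
    ∃ x ∈ A, δ / 8 * #B ≤ #{v ∈ B | T x v ∧ δ * #A / 8 ≤ #{u ∈ A | T u v ∧ T u x}} := by
  set θ := δ * #A / 8 with hθ
  have hA : A.Nonempty := by
    rw [← card_pos, Nat.pos_iff_ne_zero]
    intro hA_empty
    simp [hA_empty] at hδA
    linarith
  have hvertex (v : V) : ((#{u ∈ A | T u v} : ℝ) - 1) / 2 - θ ≤
      #{x ∈ A | T x v ∧ θ ≤ #{u ∈ A | T u v ∧ T u x}} := by
    simpa only [filter_filter] using
      hT.card_sub_one_div_two_sub_le_card_filter {u ∈ A | T u v} (θ := θ) (by rw [hθ]; linarith)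
  have hindeg : ∑ v ∈ B, (#{u ∈ A | T u v} : ℝ) = δ * #A * #B := by
    rw [← hδ, eDir_eq_sum_card_filter]
    push_cast
    rfl
  have hdouble : ∑ v ∈ B, (#{x ∈ A | T x v ∧ θ ≤ #{u ∈ A | T u v ∧ T u x}} : ℝ) =
      ∑ x ∈ A, (#{v ∈ B | T x v ∧ θ ≤ #{u ∈ A | T u v ∧ T u x}} : ℝ) := by
    simp only [card_filter]
    push_cast
    exact sum_comm
  refine exists_le_of_sum_le hA ?_
  calc ∑ _x ∈ A, δ / 8 * #B
      ≤ ∑ v ∈ B, (((#{u ∈ A | T u v} : ℝ) - 1) / 2 - θ) := by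
        simp only [sum_sub_distrib, ← sum_div, sum_const, nsmul_eq_mul, hindeg]
        have hB : (0 : ℝ) ≤ #B := (#B).cast_nonneg
        rw [hθ]
        nlinarith
    _ ≤ _ := sum_le_sum fun v _ => hvertex v
    _ = _ := hdouble

end IsTournament

theorem counting_lemma_general {V : Type*} [DecidableEq V]
    (T : V → V → Prop) [DecidableRel T] (hT : IsTournament T)
    (X Y : Finset V) (δ : ℝ)
    (hδ : (eDir T X Y : ℝ) = δ * X.card * Y.card)
    (hδX : 2 ^ 10 < δ * X.card) (hδY : 2 ^ 10 < δ * Y.card) :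
    ∃ x ∈ X, ∃ y ∈ Y,
      δ / 8 * X.card ≤
        ({u : V | u ∈ X ∧ T u y ∧
          δ * Y.card / 8 ≤ ({w : V | w ∈ Y ∧ T u w ∧ T y w}.ncard : ℝ)}.ncard : ℝ) ∧
      δ / 8 * Y.card ≤
        ({v : V | v ∈ Y ∧ T x v ∧
          δ * X.card / 8 ≤ ({w : V | w ∈ X ∧ T w v ∧ T w x}.ncard : ℝ)}.ncard : ℝ) := by
  simp_rw [Finset.ncard_setOf_mem_and]
  obtain ⟨x, hx, hYx⟩ := hT.exists_le_card_filter_out_common_in X Y hδ (by linarith)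
  obtain ⟨y, hy, hXy⟩ := hT.swap.exists_le_card_filter_out_common_in Y X
    (by rw [eDir_swap, hδ]; ring) (by linarith)
  exact ⟨x, hx, y, hy, hXy, hYx⟩

/-- counting lemma: if `e⃗(X,Y) = δ|X||Y|` and `δ|X|, δ|Y| > 2^{10}`, then
there are `x ∈ X` and `y ∈ Y` with `|X(y)| ≥ (δ/8)|X|` and `|Y(x)| ≥ (δ/8)|Y|`, where
`Y(x) = {v ∈ N⁺_Y(x) : |N⁻_X(v) ∩ N⁻_X(x)| ≥ δ|X|/8}` and
`X(y) = {u ∈ N⁻_X(y) : |N⁺_Y(u) ∩ N⁺_Y(y)| ≥ δ|Y|/8}`. -/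
theorem counting_lemma {V : Type*} [Fintype V] [DecidableEq V]
    (T : V → V → Prop) [DecidableRel T] (hT : IsTournament T)
    (X Y : Finset V) (hdisj : Disjoint X Y) (hunion : X ∪ Y = Finset.univ)
    (hX : X.Nonempty) (hY : Y.Nonempty) (δ : ℝ)
    (hδ : (eDir T X Y : ℝ) = δ * X.card * Y.card)
    (hδX : 2 ^ 10 < δ * X.card) (hδY : 2 ^ 10 < δ * Y.card) :
    ∃ x ∈ X, ∃ y ∈ Y,
      δ / 8 * X.card ≤
        ({u : V | u ∈ X ∧ T u y ∧
          δ * Y.card / 8 ≤ ({w : V | w ∈ Y ∧ T u w ∧ T y w}.ncard : ℝ)}.ncard : ℝ) ∧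
      δ / 8 * Y.card ≤
        ({v : V | v ∈ Y ∧ T x v ∧
          δ * X.card / 8 ≤ ({w : V | w ∈ X ∧ T w v ∧ T w x}.ncard : ℝ)}.ncard : ℝ) :=
  counting_lemma_general T hT X Y δ hδ hδX hδY
end

section
/- Let T be a tournament on n vertices with minimum semidegree δ⁰(T) ≥ n/4, and let (A',B') be a partition of V(T) with ||A'| − |B'|| ≤ 1. Let 0 < δ ≤ 1 be such that e⃗(A',B') = δn²/4, and assume δ^{1/4}·n ≥ 1. Then there exist A ⊆ A' and B ⊆ B' such that |V(T) \ (A ∪ B)| ≤ 12·δ^{1/4}·n, every vertex of A has both out-degree and in-degree in the subtournament T[A] at least |A|/2 − 10·δ^{1/4}·n, and every vertex of B has both out-degree and in-degree in T[B] at least |B|/2 − 10·δ^{1/4}·n. -/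
/-- Out-degree of `v` in `T`. -/
def outDeg {V : Type*} [Fintype V] (T : V → V → Prop) [DecidableRel T] (v : V) : ℕ :=
  (Finset.univ.filter fun u => T v u).card

/-- In-degree of `v` in `T`. -/
def inDeg {V : Type*} [Fintype V] (T : V → V → Prop) [DecidableRel T] (v : V) : ℕ :=
  (Finset.univ.filter fun u => T u v).card

/-- The minimum semidegree of `T` is at least `x`. -/
def MinSemidegGE {V : Type*} [Fintype V] (T : V → V → Prop) [DecidableRel T] (x : ℝ) : Prop :=
  ∀ v : V, x ≤ (outDeg T v : ℝ) ∧ x ≤ (inDeg T v : ℝ)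

/-!
The out-degrees of the vertices of `A'` sum to `|A'|(|A'|-1)/2 + e(A',B')`, and
`|A'| - 1 ≤ n/2`; hence both the excesses `d⁺(v) - n/4` and the cross-degrees `d⁺_{B'}(v)`,
`v ∈ A'`, sum to at most `e(A',B') = δn²/4`. By Markov's inequality, deleting the vertices where
either exceeds `δ^{1/2} n` removes at most `δ^{1/2} n / 2` vertices. A surviving vertex then has
out-degree in `A` close to `n/4 ≈ |A|/2`, and, as a tournament, in-degree in `A` close to
`|A| - 1 - n/4 ≈ |A|/2`. The same argument in the reversed tournament handles `B'`.
-/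

open Finset

section

variable {V : Type*} {T : V → V → Prop}

lemma sum_card_filter_rel_eq_eDir [DecidableRel T] (X Y : Finset V) :
    ∑ x ∈ X, #{y ∈ Y | T x y} = eDir T X Y := by
  rw [eDir, card_filter, sum_product]
  exact sum_congr rfl fun x _ => card_filter _ _

lemma sum_card_filter_rel_eq_eDir' [DecidableRel T] (X Y : Finset V) :
    ∑ y ∈ Y, #{x ∈ X | T x y} = eDir T X Y := by
  rw [eDir, card_filter, sum_product_right]
  exact sum_congr rfl fun y _ => card_filter _ _

lemma eDir_swap_s17 [DecidableRel T] (X Y : Finset V) :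
    eDir (fun u v => T v u) X Y = eDir T Y X := by
  rw [← sum_card_filter_rel_eq_eDir, ← sum_card_filter_rel_eq_eDir']

lemma IsTournament.swap_s17 (hT : IsTournament T) : IsTournament fun u v => T v u :=
  ⟨hT.1, fun u v huv => hT.2 v u huv.symm⟩

lemma IsTournament.card_filter_add_card_filter_add_one [DecidableEq V] [DecidableRel T]
    (hT : IsTournament T) {X : Finset V} {v : V} (hv : v ∈ X) :
    #{u ∈ X | T v u} + #{u ∈ X | T u v} + 1 = #X := by
  have hdisj : Disjoint {u ∈ X | T v u} {u ∈ X | T u v} := by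
    refine disjoint_filter.2 fun u _ hvu huv => ?_
    rcases eq_or_ne u v with rfl | hne
    · exact hT.1 u hvu
    · exact (hT.2 v u hne.symm).1 hvu huv
  rw [← card_union_of_disjoint hdisj, ← filter_or, ← card_erase_add_one hv]
  congr 2
  ext u
  by_cases huv : u = v
  · subst huv; simp [hT.1 u]
  · simp only [mem_filter, mem_erase, huv, ne_eq, not_false_eq_true, true_and]
    have := hT.2 u v huv
    tauto

lemma IsTournament.two_mul_eDir_self_add_card [DecidableEq V] [DecidableRel T]
    (hT : IsTournament T) (X : Finset V) : 2 * eDir T X X + #X = #X * #X := by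
  have h := sum_congr rfl fun v (hv : v ∈ X) => hT.card_filter_add_card_filter_add_one hv
  rw [sum_add_distrib, sum_add_distrib, sum_card_filter_rel_eq_eDir,
    sum_card_filter_rel_eq_eDir', sum_const, sum_const, smul_eq_mul, smul_eq_mul] at h
  omega

lemma outDeg_eq_add_of_partition [Fintype V] [DecidableEq V] [DecidableRel T]
    {A B : Finset V} (hdisj : Disjoint A B) (hunion : A ∪ B = univ) (v : V) :
    outDeg T v = #{u ∈ A | T v u} + #{u ∈ B | T v u} := by
  rw [outDeg, ← hunion, filter_union, card_union_of_disjoint (disjoint_filter_filter hdisj)]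

lemma IsTournament.sum_outDeg_sub_le_eDir [Fintype V] [DecidableEq V] [DecidableRel T]
    (hT : IsTournament T) {A B : Finset V} (hdisj : Disjoint A B) (hunion : A ∪ B = univ)
    {d : ℝ} (hA : (#A : ℝ) - 1 ≤ 2 * d) :
    ∑ v ∈ A, ((outDeg T v : ℝ) - d) ≤ eDir T A B := by
  have hsum : ∑ v ∈ A, outDeg T v = eDir T A A + eDir T A B := by
    simp only [outDeg_eq_add_of_partition hdisj hunion]
    rw [sum_add_distrib, sum_card_filter_rel_eq_eDir, sum_card_filter_rel_eq_eDir]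
  have hself : 2 * (eDir T A A : ℝ) + #A = #A * #A := by
    exact_mod_cast hT.two_mul_eDir_self_add_card A
  rw [sum_sub_distrib, sum_const, nsmul_eq_mul, ← Nat.cast_sum, hsum, Nat.cast_add]
  nlinarith [mul_le_mul_of_nonneg_left hA (Nat.cast_nonneg (α := ℝ) #A)]

lemma card_filter_lt_le_sum_div {ι : Type*} {S : Finset ι} {f : ι → ℝ}
    (hf : ∀ i ∈ S, 0 ≤ f i) {t : ℝ} (ht : 0 < t) :
    (#{i ∈ S | t < f i} : ℝ) ≤ (∑ i ∈ S, f i) / t := by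
  have h := card_nsmul_le_sum {i ∈ S | t < f i} f t fun i hi => (mem_filter.1 hi).2.le
  rw [nsmul_eq_mul] at h
  rw [le_div_iff₀ ht]
  exact h.trans (sum_le_sum_of_subset_of_nonneg (filter_subset _ _) fun i hi _ => hf i hi)

lemma card_filter_le_card_filter_add_card_sdiff {ι : Type*} [DecidableEq ι] (A A' : Finset ι)
    (p : ι → Prop) [DecidablePred p] : #{i ∈ A' | p i} ≤ #{i ∈ A | p i} + #(A' \ A) := by
  refine (card_le_card fun i hi => ?_).trans (card_union_le _ _)
  by_cases hiA : i ∈ A <;> simp_all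

lemma IsTournament.degrees_ge_of_subset [Fintype V] [DecidableEq V] [DecidableRel T]
    (hT : IsTournament T) {A' B' : Finset V} (hdisj : Disjoint A' B') (hunion : A' ∪ B' = univ)
    {A : Finset V} (hAA' : A ⊆ A') {v : V} (hv : v ∈ A) {d t s : ℝ}
    (hout : d ≤ outDeg T v) (hout' : (outDeg T v : ℝ) ≤ d + t) (hB' : (#{u ∈ B' | T v u} : ℝ) ≤ t)
    (hs : (#(A' \ A) : ℝ) ≤ s) :
    d - t - s ≤ #{u ∈ A | T v u} ∧ #A' - 1 - d - t - s ≤ #{u ∈ A | T u v} := by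
  have hsplit : (outDeg T v : ℝ) = #{u ∈ A' | T v u} + #{u ∈ B' | T v u} := by
    exact_mod_cast outDeg_eq_add_of_partition hdisj hunion v
  have hpair : (#{u ∈ A' | T v u} : ℝ) + #{u ∈ A' | T u v} + 1 = #A' := by
    exact_mod_cast hT.card_filter_add_card_filter_add_one (hAA' hv)
  have hout_A : (#{u ∈ A' | T v u} : ℝ) ≤ #{u ∈ A | T v u} + #(A' \ A) := by
    exact_mod_cast card_filter_le_card_filter_add_card_sdiff A A' (T v ·)
  have hin_A : (#{u ∈ A' | T u v} : ℝ) ≤ #{u ∈ A | T u v} + #(A' \ A) := by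
    exact_mod_cast card_filter_le_card_filter_add_card_sdiff A A' (T · v)
  have : (0 : ℝ) ≤ #{u ∈ B' | T v u} := Nat.cast_nonneg _
  constructor <;> linarith

lemma IsTournament.exists_subset_degrees_ge [Fintype V] [DecidableEq V] [DecidableRel T]
    (hT : IsTournament T) {A' B' : Finset V} (hdisj : Disjoint A' B') (hunion : A' ∪ B' = univ)
    {d t : ℝ} (ht : 0 < t) (hout : ∀ v, d ≤ outDeg T v) (hA' : (#A' : ℝ) - 1 ≤ 2 * d) :
    ∃ A ⊆ A', (#(A' \ A) : ℝ) ≤ 2 * eDir T A' B' / t ∧ ∀ v ∈ A,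
      d - t - 2 * eDir T A' B' / t ≤ #{u ∈ A | T v u} ∧
      #A' - 1 - d - t - 2 * eDir T A' B' / t ≤ #{u ∈ A | T u v} := by
  set e : ℝ := (eDir T A' B' : ℝ)
  set A := {v ∈ A' | (#{u ∈ B' | T v u} : ℝ) ≤ t ∧ (outDeg T v : ℝ) - d ≤ t}
  have hcross : (#{v ∈ A' | t < (#{u ∈ B' | T v u} : ℝ)} : ℝ) ≤ e / t := by
    have h := card_filter_lt_le_sum_div (S := A') (fun v _ => Nat.cast_nonneg #{u ∈ B' | T v u}) ht
    rwa [← Nat.cast_sum, sum_card_filter_rel_eq_eDir] at h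
  have hexcess : (#{v ∈ A' | t < (outDeg T v : ℝ) - d} : ℝ) ≤ e / t :=
    (card_filter_lt_le_sum_div (fun v _ => sub_nonneg.2 (hout v)) ht).trans
      (div_le_div_of_nonneg_right (hT.sum_outDeg_sub_le_eDir hdisj hunion hA') ht.le)
  have hremoved : (#(A' \ A) : ℝ) ≤ 2 * e / t := by
    have hsub : A' \ A ⊆
        {v ∈ A' | t < (#{u ∈ B' | T v u} : ℝ)} ∪ {v ∈ A' | t < (outDeg T v : ℝ) - d} := by
      intro v hv
      simp only [A, mem_sdiff, mem_filter, mem_union, not_and_or, not_le] at hv ⊢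
      tauto
    calc (#(A' \ A) : ℝ)
        ≤ #{v ∈ A' | t < (#{u ∈ B' | T v u} : ℝ)} + #{v ∈ A' | t < (outDeg T v : ℝ) - d} := by
          exact_mod_cast (card_le_card hsub).trans (card_union_le _ _)
      _ ≤ e / t + e / t := add_le_add hcross hexcess
      _ = 2 * e / t := by ring
  refine ⟨A, filter_subset _ _, hremoved, fun v hv => ?_⟩
  obtain ⟨-, hB', hexc⟩ := mem_filter.1 hv
  exact hT.degrees_ge_of_subset hdisj hunion (filter_subset _ _) hv (hout v) (by linarith) hB'
    hremoved

lemma IsTournament.exists_almost_regular_subset [Fintype V] [DecidableEq V] [DecidableRel T]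
    (hT : IsTournament T) {A' B' : Finset V} (hdisj : Disjoint A' B') (hunion : A' ∪ B' = univ)
    (hout : ∀ v, (Fintype.card V : ℝ) / 4 ≤ outDeg T v)
    (hA'_ge : ((Fintype.card V : ℝ) - 1) / 2 ≤ #A') (hA'_le : (#A' : ℝ) ≤ (Fintype.card V + 1) / 2)
    {a : ℝ} (ha0 : 0 < a) (ha1 : a ≤ 1) (han : 1 ≤ a * Fintype.card V)
    (he : (eDir T A' B' : ℝ) ≤ a ^ 4 * (Fintype.card V : ℝ) ^ 2 / 4) :
    ∃ A ⊆ A', (#(A' \ A) : ℝ) ≤ 6 * a * Fintype.card V ∧ ∀ v ∈ A,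
      (#A : ℝ) / 2 - 10 * a * Fintype.card V ≤ #{u ∈ A | T v u} ∧
      (#A : ℝ) / 2 - 10 * a * Fintype.card V ≤ #{u ∈ A | T u v} := by
  set n : ℝ := (Fintype.card V : ℝ)
  have hn : 0 < n := pos_of_mul_pos_right (one_pos.trans_le han) ha0.le
  -- As `e(A',B') ≤ a⁴n²/4`, the threshold `t = a²n` balances the error terms `t` and `2e(A',B')/t`.
  have ht : 0 < a ^ 2 * n := by positivity
  obtain ⟨A, hAA', hremoved, hdeg⟩ :=
    hT.exists_subset_degrees_ge hdisj hunion ht hout (d := n / 4) (by linarith)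
  have herr : 2 * (eDir T A' B' : ℝ) / (a ^ 2 * n) ≤ a ^ 2 * n / 2 := by
    rw [div_le_iff₀ ht]; linarith
  have hsq : a ^ 2 * n ≤ a * n := by nlinarith [mul_le_mul_of_nonneg_left ha1 (mul_pos ha0 hn).le]
  have hAcard : (#A : ℝ) ≤ #A' := by exact_mod_cast card_le_card hAA'
  refine ⟨A, hAA', by linarith, fun v hv => ?_⟩
  obtain ⟨hout_v, hin_v⟩ := hdeg v hv
  constructor <;> linarith

end

/-- given a balanced partition `(A',B')` with `e⃗(A',B') = δn²/4`, one finds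
`A ⊆ A'` and `B ⊆ B'` leaving out at most `12δ^{1/4}n` vertices such that `T[A]` and `T[B]`
are `10δ^{1/4}n`-almost regular. -/
theorem almost_regular_subsets {V : Type*} [Fintype V] [DecidableEq V]
    (T : V → V → Prop) [DecidableRel T] (hT : IsTournament T)
    (hdeg : MinSemidegGE T ((Fintype.card V : ℝ) / 4))
    (A' B' : Finset V) (hdisj : Disjoint A' B') (hunion : A' ∪ B' = Finset.univ)
    (hbal : |(A'.card : ℝ) - (B'.card : ℝ)| ≤ 1)
    (δ : ℝ) (hδ0 : 0 < δ) (hδ1 : δ ≤ 1)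
    (he : (eDir T A' B' : ℝ) = δ * (Fintype.card V : ℝ) ^ 2 / 4)
    (hδn : 1 ≤ δ ^ ((1 : ℝ) / 4) * (Fintype.card V : ℝ)) :
    ∃ A ⊆ A', ∃ B ⊆ B',
      ((Finset.univ \ (A ∪ B)).card : ℝ) ≤ 12 * δ ^ ((1 : ℝ) / 4) * (Fintype.card V : ℝ) ∧
      (∀ v ∈ A,
        (A.card : ℝ) / 2 - 10 * δ ^ ((1 : ℝ) / 4) * (Fintype.card V : ℝ) ≤
          ((A.filter fun u => T v u).card : ℝ) ∧
        (A.card : ℝ) / 2 - 10 * δ ^ ((1 : ℝ) / 4) * (Fintype.card V : ℝ) ≤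
          ((A.filter fun u => T u v).card : ℝ)) ∧
      (∀ v ∈ B,
        (B.card : ℝ) / 2 - 10 * δ ^ ((1 : ℝ) / 4) * (Fintype.card V : ℝ) ≤
          ((B.filter fun u => T v u).card : ℝ) ∧
        (B.card : ℝ) / 2 - 10 * δ ^ ((1 : ℝ) / 4) * (Fintype.card V : ℝ) ≤
          ((B.filter fun u => T u v).card : ℝ)) := by
  set a := δ ^ ((1 : ℝ) / 4)
  have ha0 : 0 < a := by positivity
  have ha1 : a ≤ 1 := Real.rpow_le_one hδ0.le hδ1 (by norm_num)
  have ha4 : a ^ 4 = δ := by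
    rw [← Real.rpow_natCast, ← Real.rpow_mul hδ0.le]; norm_num
  have hcard : (#A' : ℝ) + #B' = Fintype.card V := by
    rw [← card_univ, ← hunion, card_union_of_disjoint hdisj, Nat.cast_add]
  obtain ⟨hbal₁, hbal₂⟩ := abs_le.1 hbal
  obtain ⟨A, hAA', hA, hAdeg⟩ := hT.exists_almost_regular_subset hdisj hunion
    (fun v => (hdeg v).1) (by linarith) (by linarith) ha0 ha1 hδn (by rw [ha4, he])
  obtain ⟨B, hBB', hB, hBdeg⟩ := hT.swap_s17.exists_almost_regular_subset hdisj.symm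
    (by rw [union_comm, hunion]) (fun v => (hdeg v).2) (by linarith) (by linarith) ha0 ha1 hδn
    (by rw [eDir_swap_s17, ha4, he])
  refine ⟨A, hAA', B, hBB', ?_, hAdeg, fun v hv => (hBdeg v hv).symm⟩
  have hsub : univ \ (A ∪ B) ⊆ (A' \ A) ∪ (B' \ B) := by
    rw [← hunion]; intro v; simp only [mem_sdiff, mem_union]; tauto
  calc (#(univ \ (A ∪ B)) : ℝ) ≤ #(A' \ A) + #(B' \ B) := by
        exact_mod_cast (card_le_card hsub).trans (card_union_le _ _)
    _ ≤ 12 * a * Fintype.card V := by linarith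
end
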